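/- Let P be a probability measure on ℝ^d with bounded support and a bounded density with respect to Lebesgue measure. Fix distinct centers μ = (μ_1,…,μ_k). Then there exists a constant A > 0 and a neighborhood K of μ such that for all μ' ∈ K, P(C_r(μ) Δ C_r(μ')) ≤ A‖μ − μ'‖ for every r ≤ k, where C_r denotes Voronoi cells. -/

import Mathlib

open MeasureTheory
open scoped symmDiff ENNReal

/-- The (closed) Voronoi cell of the `r`-th center. -/
def voronoiCell {d k : ℕ} (μ : Fin k → EuclideanSpace ℝ (Fin d)) (r : Fin k) :
    Set (EuclideanSpace ℝ (Fin d)) :=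
  {x | ∀ s, dist x (μ r) ≤ dist x (μ s)}

/-!
The cells `C_r(μ)` and `C_r(μ')` can only disagree at points `x` that are almost equidistant from
`μ r` and some other center `μ s`: `|d(x, μ s) - d(x, μ r)| ≤ 2‖μ - μ'‖`. On a ball of radius `R`
this forces `⟪x, μ r - μ s⟫` into an interval of length `O(‖μ - μ'‖)` around the bisector value,
i.e. `x` lies in a slab of width `O(‖μ - μ'‖ / ‖μ r - μ s‖)`, whose intersection with the ball has
volume `O(‖μ - μ'‖ R^(d-1) / min_{r ≠ s} ‖μ r - μ s‖)`. The bounded density with bounded support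
turns this volume bound into a bound on `P`.
-/

open Metric Module
open scoped RealInnerProductSpace Topology

theorem withDensity_le_smul_restrict {α : Type*} [MeasurableSpace α] {μ : Measure α}
    {f : α → ℝ≥0∞} {M : ℝ≥0∞} {S : Set α} (hS : MeasurableSet S) (hfM : ∀ x, f x ≤ M)
    (hfS : Function.support f ⊆ S) : μ.withDensity f ≤ M • μ.restrict S := by
  have hf : f ≤ S.indicator fun _ ↦ M := fun x ↦ by
    by_cases hx : x ∈ S
    · simpa [hx] using hfM x
    · simp [hx, Function.notMem_support.1 (mt (@hfS x) hx)]
  calc μ.withDensity f ≤ μ.withDensity (S.indicator fun _ ↦ M) :=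
        withDensity_mono (Filter.Eventually.of_forall hf)
    _ = M • μ.restrict S := by rw [withDensity_indicator hS, withDensity_const]

theorem Function.Injective.exists_pos_le_dist {ι X : Type*} [Finite ι] [MetricSpace X]
    {μ : ι → X} (hμ : Function.Injective μ) :
    ∃ δ > 0, ∀ r s, r ≠ s → δ ≤ dist (μ r) (μ s) := by
  have : ∀ᶠ δ in 𝓝[>] (0 : ℝ), ∀ r s, r ≠ s → δ ≤ dist (μ r) (μ s) := by
    simp only [Filter.eventually_all]
    exact fun r s hrs ↦ nhdsWithin_le_nhds <|
      (eventually_lt_nhds (dist_pos.2 (hμ.ne hrs))).mono fun _ ↦ le_of_lt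
  exact (this.and self_mem_nhdsWithin).exists.imp fun δ h ↦ ⟨h.2, h.1⟩

theorem abs_inner_sub_sub_le_of_abs_dist_sub_le {F : Type*} [NormedAddCommGroup F]
    [InnerProductSpace ℝ F] {x a b : F} {η C : ℝ} (h : |dist x a - dist x b| ≤ η)
    (ha : dist x a ≤ C) (hb : dist x b ≤ C) :
    |⟪x, b - a⟫ - (‖b‖ ^ 2 - ‖a‖ ^ 2) / 2| ≤ η * C := by
  have key : ⟪x, b - a⟫ - (‖b‖ ^ 2 - ‖a‖ ^ 2) / 2
      = (dist x a - dist x b) * (dist x a + dist x b) / 2 := by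
    rw [dist_eq_norm, dist_eq_norm, inner_sub_right]
    linear_combination (norm_sub_sq_real x b - norm_sub_sq_real x a) / 2
  have hη : 0 ≤ η := (abs_nonneg _).trans h
  rw [key, abs_div, abs_mul, abs_of_nonneg (by positivity : 0 ≤ dist x a + dist x b),
    abs_two]
  calc |dist x a - dist x b| * (dist x a + dist x b) / 2 ≤ η * (C + C) / 2 := by gcongr
    _ = η * C := by ring

theorem volume_slab_inter_closedBall_le {E : Type*} [NormedAddCommGroup E]
    [InnerProductSpace ℝ E] [FiniteDimensional ℝ E] [MeasurableSpace E] [BorelSpace E]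
    {v : E} (hv : v ≠ 0) (c w R : ℝ) :
    volume ({x : E | |⟪x, v⟫ - c| ≤ w} ∩ closedBall 0 R) ≤
      ENNReal.ofReal (2 * w / ‖v‖) * ENNReal.ofReal (2 * R) ^ (finrank ℝ E - 1) := by
  obtain ⟨m, hm⟩ : ∃ m, finrank ℝ E = m + 1 :=
    Nat.exists_eq_succ_of_ne_zero (finrank_pos_iff_exists_ne_zero.2 ⟨v, hv⟩).ne'
  set u : E := ‖v‖⁻¹ • v
  have hu : Orthonormal ℝ (Set.domRestrict {(0 : Fin (m + 1))} fun _ ↦ u) :=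
    ⟨fun _ ↦ norm_smul_inv_norm hv, fun i j hij ↦ (hij (Subsingleton.elim i j)).elim⟩
  obtain ⟨b, hb⟩ := hu.exists_orthonormalBasis_extension_of_card_eq (by simp [hm])
  have hb0 : b 0 = u := hb 0 rfl
  -- in the coordinates of `b`, the set lies in a box with one side of length `2 * w / ‖v‖`
  let box : Fin (m + 1) → Set ℝ :=
    Fin.cons (Set.Icc ((c - w) / ‖v‖) ((c + w) / ‖v‖)) fun _ ↦ Set.Icc (-R) R
  have hsub : {x : E | |⟪x, v⟫ - c| ≤ w} ∩ closedBall 0 R ⊆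
      b.repr ⁻¹' (WithLp.ofLp ⁻¹' Set.univ.pi box) := by
    rintro x ⟨hxv : |⟪x, v⟫ - c| ≤ w, hxR⟩ i -
    have hvpos : 0 < ‖v‖ := norm_pos_iff.2 hv
    change b.repr x i ∈ box i
    rw [b.repr_apply_apply]
    induction i using Fin.cases with
    | zero =>
      simp only [box, Fin.cons_zero]
      rw [hb0, real_inner_smul_left, real_inner_comm, inv_mul_eq_div]
      obtain ⟨h1, h2⟩ := abs_sub_le_iff.1 hxv
      exact ⟨div_le_div_of_nonneg_right (by linarith) hvpos.le,
        div_le_div_of_nonneg_right (by linarith) hvpos.le⟩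
    | succ j =>
      simp only [box, Fin.cons_succ]
      rw [mem_closedBall_zero_iff] at hxR
      refine abs_le.1 ((abs_real_inner_le_norm _ _).trans ?_)
      rw [b.orthonormal.1, one_mul]
      exact hxR
  have hbox : MeasurableSet (Set.univ.pi box) :=
    .univ_pi fun i ↦ Fin.cases measurableSet_Icc (fun _ ↦ measurableSet_Icc) i
  calc volume ({x : E | |⟪x, v⟫ - c| ≤ w} ∩ closedBall 0 R)
      ≤ volume (b.repr ⁻¹' (WithLp.ofLp ⁻¹' Set.univ.pi box)) := measure_mono hsub
    _ = volume (Set.univ.pi box) := by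
      rw [b.measurePreserving_repr.measure_preimage,
        (PiLp.volume_preserving_ofLp _).measure_preimage]
      · exact hbox.nullMeasurableSet
      · exact (WithLp.measurable_ofLp _ _ hbox).nullMeasurableSet
    _ = ENNReal.ofReal (2 * w / ‖v‖) * ENNReal.ofReal (2 * R) ^ (finrank ℝ E - 1) := by
      rw [volume_pi_pi, Fin.prod_univ_succ]
      simp only [box, Fin.cons_zero, Fin.cons_succ, Real.volume_Icc, Finset.prod_const,
        Finset.card_univ, Fintype.card_fin, hm, Nat.add_sub_cancel]
      congr 3 <;> ring

section Voronoi

variable {d k : ℕ}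

theorem voronoiCell_symmDiff_subset {μ μ' : Fin k → EuclideanSpace ℝ (Fin d)} {δ : ℝ}
    (hδ : ∀ i, dist (μ i) (μ' i) ≤ δ) (r : Fin k) :
    voronoiCell μ r ∆ voronoiCell μ' r ⊆
      ⋃ s ∈ Finset.univ.erase r, {x | |dist x (μ s) - dist x (μ r)| ≤ 2 * δ} := by
  intro x hx
  have hμμ' i : |dist x (μ i) - dist x (μ' i)| ≤ δ := by
    simpa only [dist_comm x] using (abs_dist_sub_le _ _ x).trans (hδ i)
  simp only [Set.mem_symmDiff, voronoiCell, Set.mem_ofPred_eq, not_forall, not_le] at hx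
  simp only [Set.mem_iUnion, Finset.mem_erase, Finset.mem_univ, and_true, Set.mem_ofPred_eq]
  rcases hx with ⟨hx, s, hs⟩ | ⟨hx, s, hs⟩ <;>
  · refine ⟨s, fun hsr ↦ (hsr ▸ hs).false, abs_le.2 ⟨?_, ?_⟩⟩ <;>
    linarith [hx s, abs_le.1 (hμμ' s), abs_le.1 (hμμ' r)]

theorem volume_voronoiCell_symmDiff_inter_closedBall_le {μ : Fin k → EuclideanSpace ℝ (Fin d)}
    {δ₀ R : ℝ} (hδ₀ : 0 < δ₀) (hsep : ∀ r s, r ≠ s → δ₀ ≤ dist (μ r) (μ s)) (hR : 0 ≤ R)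
    (μ' : Fin k → EuclideanSpace ℝ (Fin d)) (r : Fin k) :
    volume ((voronoiCell μ r ∆ voronoiCell μ' r) ∩ closedBall 0 R) ≤
      ENNReal.ofReal (k * (4 * (R + ‖μ‖) / δ₀ * (2 * R) ^ (d - 1)) * dist μ μ') := by
  set δ := dist μ μ'
  set C := R + ‖μ‖
  have hC : 0 ≤ C := add_nonneg hR (norm_nonneg μ)
  let slab s : Set (EuclideanSpace ℝ (Fin d)) :=
    {x | |⟪x, μ r - μ s⟫ - (‖μ r‖ ^ 2 - ‖μ s‖ ^ 2) / 2| ≤ 2 * δ * C}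
  have hsub : (voronoiCell μ r ∆ voronoiCell μ' r) ∩ closedBall 0 R ⊆
      ⋃ s ∈ Finset.univ.erase r, slab s ∩ closedBall 0 R := by
    rintro x ⟨hx, hxR⟩
    obtain ⟨s, hs, hxs⟩ :=
      Set.mem_iUnion₂.1 (voronoiCell_symmDiff_subset (dist_le_pi_dist μ μ') r hx)
    have hdist i : dist x (μ i) ≤ C := by
      rw [dist_eq_norm]
      exact (norm_sub_le _ _).trans
        (add_le_add (mem_closedBall_zero_iff.1 hxR) (norm_le_pi_norm μ i))
    exact Set.mem_iUnion₂.2 ⟨s, hs,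
      abs_inner_sub_sub_le_of_abs_dist_sub_le hxs (hdist s) (hdist r), hxR⟩
  have hslab : ∀ s ∈ Finset.univ.erase r, volume (slab s ∩ closedBall 0 R) ≤
      ENNReal.ofReal (4 * C / δ₀ * (2 * R) ^ (d - 1) * δ) := by
    intro s hs
    have hrs : r ≠ s := (Finset.ne_of_mem_erase hs).symm
    have hv : δ₀ ≤ ‖μ r - μ s‖ := dist_eq_norm (μ r) (μ s) ▸ hsep r s hrs
    have hwidth : 2 * (2 * δ * C) / ‖μ r - μ s‖ ≤ 4 * C / δ₀ * δ := by
      rw [div_mul_eq_mul_div, show 2 * (2 * δ * C) = 4 * C * δ by ring]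
      exact div_le_div_of_nonneg_left (by positivity) hδ₀ hv
    calc volume (slab s ∩ closedBall 0 R)
        ≤ ENNReal.ofReal (2 * (2 * δ * C) / ‖μ r - μ s‖) * ENNReal.ofReal (2 * R) ^ (d - 1) := by
          simpa only [finrank_euclideanSpace_fin] using
            volume_slab_inter_closedBall_le (norm_pos_iff.1 (hδ₀.trans_le hv)) _ _ R
      _ ≤ ENNReal.ofReal (4 * C / δ₀ * δ) * ENNReal.ofReal (2 * R) ^ (d - 1) := by gcongr
      _ = ENNReal.ofReal (4 * C / δ₀ * (2 * R) ^ (d - 1) * δ) := by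
        rw [← ENNReal.ofReal_pow (by positivity), ← ENNReal.ofReal_mul (by positivity)]
        ring_nf
  calc volume ((voronoiCell μ r ∆ voronoiCell μ' r) ∩ closedBall 0 R)
      ≤ ∑ s ∈ Finset.univ.erase r, volume (slab s ∩ closedBall 0 R) :=
        (measure_mono hsub).trans (measure_biUnion_finset_le _ _)
    _ ≤ ∑ s ∈ Finset.univ.erase r, ENNReal.ofReal (4 * C / δ₀ * (2 * R) ^ (d - 1) * δ) :=
        Finset.sum_le_sum hslab
    _ ≤ ENNReal.ofReal (k * (4 * C / δ₀ * (2 * R) ^ (d - 1)) * δ) := by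
      rw [Finset.sum_const, nsmul_eq_mul, ← ENNReal.ofReal_natCast,
        ← ENNReal.ofReal_mul (by positivity), ← mul_assoc]
      gcongr
      exact_mod_cast (Finset.card_erase_le).trans (Finset.card_univ.trans (Fintype.card_fin k)).le

end Voronoi

theorem voronoi_symmDiff_prob_lipschitz_general {d k : ℕ}
    (P : Measure (EuclideanSpace ℝ (Fin d)))
    (f : EuclideanSpace ℝ (Fin d) → ℝ≥0∞)
    (hPf : P = MeasureTheory.volume.withDensity f)
    (hfbdd : ∃ M : ℝ≥0∞, M < ⊤ ∧ ∀ x, f x ≤ M)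
    (hsupp : Bornology.IsBounded (Function.support f))
    (μ : Fin k → EuclideanSpace ℝ (Fin d)) (hμ : Function.Injective μ) :
    ∃ A > (0 : ℝ), ∃ ε > (0 : ℝ), ∀ μ' : Fin k → EuclideanSpace ℝ (Fin d),
      dist μ μ' < ε → ∀ r,
        (P (voronoiCell μ r ∆ voronoiCell μ' r)).toReal ≤ A * dist μ μ' := by
  obtain ⟨M, hM, hfM⟩ := hfbdd
  obtain ⟨R, hR, hfR⟩ := hsupp.subset_closedBall_lt 0 0
  obtain ⟨δ₀, hδ₀, hsep⟩ := hμ.exists_pos_le_dist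
  set L := k * (4 * (R + ‖μ‖) / δ₀ * (2 * R) ^ (d - 1))
  refine ⟨M.toReal * L + 1, by positivity, 1, one_pos, fun μ' _ r ↦ ?_⟩
  have hP : P ≤ M • volume.restrict (closedBall 0 R) :=
    hPf ▸ withDensity_le_smul_restrict measurableSet_closedBall hfM hfR
  have hbound : P (voronoiCell μ r ∆ voronoiCell μ' r) ≤ M * ENNReal.ofReal (L * dist μ μ') :=
    calc P (voronoiCell μ r ∆ voronoiCell μ' r)
        ≤ M * volume ((voronoiCell μ r ∆ voronoiCell μ' r) ∩ closedBall 0 R) := by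
          simpa only [Measure.smul_apply, Measure.restrict_apply' measurableSet_closedBall,
            smul_eq_mul] using hP _
      _ ≤ M * ENNReal.ofReal (L * dist μ μ') := by
          gcongr
          exact volume_voronoiCell_symmDiff_inter_closedBall_le hδ₀ hsep hR.le μ' r
  calc (P (voronoiCell μ r ∆ voronoiCell μ' r)).toReal ≤ M.toReal * (L * dist μ μ') := by
        simpa only [ENNReal.toReal_mul, ENNReal.toReal_ofReal (by positivity : 0 ≤ L * dist μ μ')]
          using ENNReal.toReal_mono (ENNReal.mul_ne_top hM.ne ENNReal.ofReal_ne_top) hbound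
    _ ≤ (M.toReal * L + 1) * dist μ μ' := by
      rw [add_mul, one_mul, mul_assoc M.toReal]
      exact le_add_of_nonneg_right (dist_nonneg : 0 ≤ dist μ μ')

/-- Let `P` be a probability measure on `ℝ^d` with bounded support and bounded density
with respect to Lebesgue measure, and let `μ` be a tuple of distinct centers.  Then
there are `A > 0` and a neighborhood of `μ` on which
`P(C_r(μ) Δ C_r(μ')) ≤ A ‖μ − μ'‖` for every `r`. -/
theorem voronoi_symmDiff_prob_lipschitz {d k : ℕ}
    (P : Measure (EuclideanSpace ℝ (Fin d))) [IsProbabilityMeasure P]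
    (f : EuclideanSpace ℝ (Fin d) → ℝ≥0∞)
    (hPf : P = MeasureTheory.volume.withDensity f)
    (hfbdd : ∃ M : ℝ≥0∞, M < ⊤ ∧ ∀ x, f x ≤ M)
    (hsupp : Bornology.IsBounded (Function.support f))
    (μ : Fin k → EuclideanSpace ℝ (Fin d)) (hμ : Function.Injective μ) :
    ∃ A > (0 : ℝ), ∃ ε > (0 : ℝ), ∀ μ' : Fin k → EuclideanSpace ℝ (Fin d),
      dist μ μ' < ε → ∀ r,
        (P (voronoiCell μ r ∆ voronoiCell μ' r)).toReal ≤ A * dist μ μ' :=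
  voronoi_symmDiff_prob_lipschitz_general P f hPf hfbdd hsupp μ hμ
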